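/- Let a < b be reals, let U_n be an (n+1)-dimensional subspace of C^n([a,b],ℝ) with a non-negative Bernstein basis p_{n,0},…,p_{n,n}, let f_0, f_1 ∈ U_n with f_0 > 0 on [a,b] and f_1/f_0 strictly increasing on [a,b], and write f_0 = Σ_k β_{n,k} p_{n,k}, f_1 = Σ_k γ_{n,k} p_{n,k}. Suppose nodes t_{n,0},…,t_{n,n} ∈ [a,b] and strictly positive weights α_{n,0},…,α_{n,n} are such that the operator B_n f = Σ_{k=0}^n f(t_{n,k}) α_{n,k} p_{n,k} satisfies B_n f_0 = f_0 and B_n f_1 = f_1. Then for every k: β_{n,k} = f_0(t_{n,k}) α_{n,k} > 0, γ_{n,k} = f_1(t_{n,k}) α_{n,k}, (f_1/f_0)(t_{n,k}) = γ_{n,k}/β_{n,k}, and α_{n,k} = β_{n,k}/f_0(t_{n,k}); in particular the nodes and weights are uniquely determined, so at most one such operator exists. -/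
import Mathlib


open Set Filter Topology

noncomputable section

/-- `p k`, `k = 0, …, n`, is a Bernstein basis of the `(n+1)`-dimensional subspace `U` of
`C^n([a,b], ℝ)`: it is a basis of `U` and each `p k` has a zero of order `k` at `a`
(derivatives of order `< k` vanish at `a`, the `k`-th does not) and a zero of order
`n - k` at `b`. -/
def IsBernsteinBasisOf (a b : ℝ) (n : ℕ) (U : Submodule ℝ (ℝ → ℝ))
    (p : Fin (n + 1) → ℝ → ℝ) : Prop :=
  (∀ k, p k ∈ U) ∧ LinearIndependent ℝ p ∧ Submodule.span ℝ (Set.range p) = U ∧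
  ∀ k : Fin (n + 1),
    (∀ j : ℕ, j < (k : ℕ) → iteratedDeriv j (p k) a = 0) ∧
    iteratedDeriv (k : ℕ) (p k) a ≠ 0 ∧
    (∀ j : ℕ, j < n - (k : ℕ) → iteratedDeriv j (p k) b = 0) ∧
    iteratedDeriv (n - (k : ℕ)) (p k) b ≠ 0

/-- `q k`, `k = 0, …, n-1`, is a Bernstein basis of the `n`-dimensional space
`D_{f₀}U = { (f/f₀)' : f ∈ U }`: every `q k` lies in `D_{f₀}U`, every element of `D_{f₀}U`
lies in the span of the `q k`, the family is linearly independent, and each `q k` has a zero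
of order `k` at `a` and a zero of order `n - 1 - k` at `b`. -/
def IsBernsteinBasisOfD (a b : ℝ) (n : ℕ) (f₀ : ℝ → ℝ) (U : Submodule ℝ (ℝ → ℝ))
    (q : Fin n → ℝ → ℝ) : Prop :=
  (∀ k, ∃ f ∈ U, q k = deriv (fun x => f x / f₀ x)) ∧
  (∀ f ∈ U, deriv (fun x => f x / f₀ x) ∈ Submodule.span ℝ (Set.range q)) ∧
  LinearIndependent ℝ q ∧
  ∀ k : Fin n,
    (∀ j : ℕ, j < (k : ℕ) → iteratedDeriv j (q k) a = 0) ∧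
    iteratedDeriv (k : ℕ) (q k) a ≠ 0 ∧
    (∀ j : ℕ, j < n - 1 - (k : ℕ) → iteratedDeriv j (q k) b = 0) ∧
    iteratedDeriv (n - 1 - (k : ℕ)) (q k) b ≠ 0

/-- If a generalized Bernstein operator built on a non-negative Bernstein basis fixes `f₀`
and `f₁`, then its nodes and weights are determined by the coordinates `β`, `γ` of `f₀`,
`f₁`; in particular at most one such operator exists. -/
theorem bernstein_nodes_weights_determined
    (n : ℕ) (a b : ℝ) (hab : a < b)
    (U : Submodule ℝ (ℝ → ℝ))
    (hUdim : Module.finrank ℝ ↥U = n + 1)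
    (hUsmooth : ∀ f ∈ U, ContDiff ℝ (n : ℕ∞) f)
    (p : Fin (n + 1) → ℝ → ℝ)
    (hp : IsBernsteinBasisOf a b n U p)
    (hpnn : ∀ k, ∀ x ∈ Set.Icc a b, 0 ≤ p k x)
    (f₀ f₁ : ℝ → ℝ) (hf₀U : f₀ ∈ U) (hf₁U : f₁ ∈ U)
    (hf₀pos : ∀ x ∈ Set.Icc a b, 0 < f₀ x)
    (hmono : StrictMonoOn (fun x => f₁ x / f₀ x) (Set.Icc a b))
    (β γ : Fin (n + 1) → ℝ)
    (hβ : ∀ x, f₀ x = ∑ k, β k * p k x)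
    (hγ : ∀ x, f₁ x = ∑ k, γ k * p k x)
    (t : Fin (n + 1) → ℝ) (α : Fin (n + 1) → ℝ)
    (htmem : ∀ k, t k ∈ Set.Icc a b) (hα : ∀ k, 0 < α k)
    (hB₀ : ∀ x, ∑ k, f₀ (t k) * α k * p k x = f₀ x)
    (hB₁ : ∀ x, ∑ k, f₁ (t k) * α k * p k x = f₁ x) :
    (∀ k, β k = f₀ (t k) * α k) ∧
    (∀ k, 0 < β k) ∧
    (∀ k, γ k = f₁ (t k) * α k) ∧
    (∀ k, f₁ (t k) / f₀ (t k) = γ k / β k) ∧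
    (∀ k, α k = β k / f₀ (t k)) ∧
    (∀ (t' α' : Fin (n + 1) → ℝ), (∀ k, t' k ∈ Set.Icc a b) → (∀ k, 0 < α' k) →
      (∀ x, ∑ k, f₀ (t' k) * α' k * p k x = f₀ x) →
      (∀ x, ∑ k, f₁ (t' k) * α' k * p k x = f₁ x) →
      t' = t ∧ α' = α) := by
  obtain ⟨hpU, hpli, hspan, hzeros⟩ := hp
  have key : ∀ (c d : Fin (n+1) → ℝ),
      (∀ x, ∑ k, c k * p k x = ∑ k, d k * p k x) → c = d := by
    intro c d h
    have hz : ∑ k, (c - d) k • p k = 0 := by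
      funext x
      simp only [Finset.sum_apply, Pi.smul_apply, smul_eq_mul, Pi.sub_apply, sub_mul,
        Finset.sum_sub_distrib, Pi.zero_apply, h x, sub_self]
    have := Fintype.linearIndependent_iff.mp hpli (c - d) hz
    funext k
    have hk := this k
    simpa [sub_eq_zero] using hk
  have hf₀t : ∀ k, 0 < f₀ (t k) := fun k => hf₀pos _ (htmem k)
  have hβeq : β = fun k => f₀ (t k) * α k := by
    apply key
    intro x
    rw [← hβ x, hB₀ x]
  have hγeq : γ = fun k => f₁ (t k) * α k := by
    apply key
    intro x
    rw [← hγ x, hB₁ x]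
  have h1 : ∀ k, β k = f₀ (t k) * α k := fun k => by rw [hβeq]
  have h2 : ∀ k, 0 < β k := fun k => by
    rw [h1 k]; exact mul_pos (hf₀t k) (hα k)
  have h3 : ∀ k, γ k = f₁ (t k) * α k := fun k => by rw [hγeq]
  have h4 : ∀ k, f₁ (t k) / f₀ (t k) = γ k / β k := by
    intro k
    rw [h1 k, h3 k, mul_div_mul_right _ _ (hα k).ne']
  have h5 : ∀ k, α k = β k / f₀ (t k) := by
    intro k
    rw [h1 k, mul_comm, mul_div_assoc, div_self (hf₀t k).ne', mul_one]
  refine ⟨h1, h2, h3, h4, h5, ?_⟩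
  intro t' α' htmem' hα' hB₀' hB₁'
  have hf₀t' : ∀ k, 0 < f₀ (t' k) := fun k => hf₀pos _ (htmem' k)
  have hβeq' : β = fun k => f₀ (t' k) * α' k := by
    apply key; intro x; rw [← hβ x, hB₀' x]
  have hγeq' : γ = fun k => f₁ (t' k) * α' k := by
    apply key; intro x; rw [← hγ x, hB₁' x]
  have h1' : ∀ k, β k = f₀ (t' k) * α' k := fun k => by rw [hβeq']
  have h3' : ∀ k, γ k = f₁ (t' k) * α' k := fun k => by rw [hγeq']
  have h4' : ∀ k, f₁ (t' k) / f₀ (t' k) = γ k / β k := by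
    intro k
    rw [h1' k, h3' k, mul_div_mul_right _ _ (hα' k).ne']
  have ht : t' = t := by
    funext k
    exact hmono.injOn (htmem' k) (htmem k) ((h4' k).trans (h4 k).symm)
  refine ⟨ht, ?_⟩
  funext k
  have : f₀ (t k) * α' k = f₀ (t k) * α k := by
    rw [← h1 k, h1' k, ht]
  exact mul_left_cancel₀ (hf₀t k).ne' this
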